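/- (Line Choice) Let Ω⁺ ⊂ ℝ² be a Jordan domain, Ω⁻ = ℝ² \ closure(Ω⁺), and Γ = ∂Ω⁺ = ∂Ω⁻. Fix α ∈ (0,1) and C₀ > 0, and suppose there exists r₀ > 0 such that ε(x,r) ≤ C₀·r^α for all x ∈ Γ and all 0 < r ≤ r₀. Fix x₀ ∈ Γ and 0 < t ≤ r₀, and let y, w ∈ ∂B(x₀,t) ∩ Γ. Let L_t(x₀,w) denote the line through x₀ and w and L_t(x₀,y) the line through x₀ and y. Then the angle between the two lines satisfies ∠(L_t(x₀,w), L_t(x₀,y)) ≤ 2C₀·t^α. -/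

import Mathlib

/-!
The ε-condition at scale `t` gives, for every `β > 2 C₀ t^α`, an open arc of `∂B(x₀, t)` in `Ω⁺`
and one in `Ω⁻`, each of angular length more than `π - β / 2`. These arcs are disjoint and miss
the boundary points `y` and `w`, so the rest of the circle consists of two gaps of total length
less than `β`, separated by arcs of length almost `π`. Hence the angular parameters of `y` and `w`
differ by less than `β` modulo `π`, which bounds the angle between the two lines.
-/

open Set Metric MeasureTheory

noncomputable section

abbrev E2 := EuclideanSpace ℝ (Fin 2)

/-- The point on the circle of center `x` and radius `r` at angle `t`. -/
def circlePt (x : E2) (r t : ℝ) : E2 :=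
  x + r • (EuclideanSpace.equiv (Fin 2) ℝ).symm ![Real.cos t, Real.sin t]

/-- `A` is an open arc of the circle `∂B(x,r)`. -/
def IsOpenArc (x : E2) (r : ℝ) (A : Set E2) : Prop :=
  ∃ a b : ℝ, a < b ∧ b - a ≤ 2 * Real.pi ∧ A = circlePt x r '' Set.Ioo a b

/-- The `H¹`-measure of the largest open arc of `∂B(x,r)` contained in `Ω`. -/
def maxArcMeasure (Ω : Set E2) (x : E2) (r : ℝ) : ℝ :=
  (⨆ A ∈ {A | IsOpenArc x r A ∧ A ⊆ Ω}, μH[1] A).toReal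

/-- The Carleson ε-function of the Jordan domain `Ω⁺`, where `Ω⁻ = ℝ² \ closure Ω⁺`. -/
def carlesonEps (Ω : Set E2) (x : E2) (r : ℝ) : ℝ :=
  (1 / r) * max |Real.pi * r - maxArcMeasure Ω x r|
      |Real.pi * r - maxArcMeasure ((closure Ω)ᶜ) x r|

/-- `Γ` is a Jordan curve: the image of a continuous injective map of the unit circle. -/
def IsJordanCurve (Γ : Set E2) : Prop :=
  ∃ f : Metric.sphere (0 : ℝ × ℝ) 1 → E2,
    Continuous f ∧ Function.Injective f ∧ Set.range f = Γ

/-- A Jordan domain: an open connected set whose boundary is a Jordan curve. -/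
def IsJordanDomain (Ω : Set E2) : Prop :=
  IsOpen Ω ∧ IsConnected Ω ∧ IsJordanCurve (frontier Ω)

/-- An affine line in the plane. -/
def IsAffineLine (L : Set E2) : Prop :=
  ∃ p v : E2, v ≠ 0 ∧ L = {y | ∃ t : ℝ, y = p + t • v}

/-- The (smaller) angle between the lines spanned by `u` and `v`, an element of `[0, π/2]`. -/
def lineAngle (u v : E2) : ℝ :=
  min (InnerProductGeometry.angle u v) (Real.pi - InnerProductGeometry.angle u v)

open Real InnerProductGeometry

def unitVec (θ : ℝ) : E2 := (EuclideanSpace.equiv (Fin 2) ℝ).symm ![cos θ, sin θ]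

lemma circlePt_eq_add_smul_unitVec (x : E2) (r θ : ℝ) : circlePt x r θ = x + r • unitVec θ := rfl

lemma unitVec_eq_repr_exp (θ : ℝ) :
    unitVec θ = Complex.orthonormalBasisOneI.repr (Complex.exp (θ * Complex.I)) := by
  ext i; fin_cases i <;> simp [unitVec, Complex.exp_ofReal_mul_I_re, Complex.exp_ofReal_mul_I_im]

lemma norm_unitVec (θ : ℝ) : ‖unitVec θ‖ = 1 := by
  simp [unitVec_eq_repr_exp, Complex.norm_exp_ofReal_mul_I]

lemma inner_unitVec (θ ψ : ℝ) : inner ℝ (unitVec θ) (unitVec ψ) = cos (θ - ψ) := by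
  simp [unitVec, PiLp.inner_apply, Fin.sum_univ_two, cos_sub]
  ring

lemma angle_unitVec (θ ψ : ℝ) : angle (unitVec θ) (unitVec ψ) = arccos (cos (θ - ψ)) := by
  simp [angle, inner_unitVec, norm_unitVec]

lemma lipschitzWith_unitVec : LipschitzWith 1 unitVec := by
  have h : unitVec = Complex.orthonormalBasisOneI.repr ∘ circleMap 0 1 := by
    funext θ; simp [unitVec_eq_repr_exp, circleMap]
  rw [h]
  simpa using
    Complex.orthonormalBasisOneI.repr.isometry.lipschitz.comp (lipschitzWith_circleMap 0 1)

lemma exists_eq_norm_smul_unitVec (u : E2) : ∃ θ, u = ‖u‖ • unitVec θ := by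
  set e := Complex.orthonormalBasisOneI.repr
  refine ⟨(e.symm u).arg, ?_⟩
  conv_lhs => rw [← e.apply_symm_apply u, ← Complex.norm_mul_exp_arg_mul_I (e.symm u)]
  rw [unitVec_eq_repr_exp, ← Complex.real_smul, map_smul, LinearIsometryEquiv.norm_map]

lemma arccos_cos_le_abs (x : ℝ) : arccos (cos x) ≤ |x| := by
  rcases le_or_gt |x| π with h | h
  · rw [← cos_abs, arccos_cos (abs_nonneg x) h]
  · exact (arccos_le_pi _).trans h.le

lemma lineAngle_le_pi_div_two (u v : E2) : lineAngle u v ≤ π / 2 := by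
  rcases le_total (angle u v) (π / 2) with h | h
  · exact (min_le_left _ _).trans h
  · exact (min_le_right _ _).trans (by linarith)

lemma lineAngle_smul_smul {c : ℝ} (hc : c ≠ 0) (u v : E2) :
    lineAngle (c • u) (c • v) = lineAngle u v := by
  simp only [lineAngle, angle_smul_smul hc]

lemma lineAngle_unitVec_le (θ ψ : ℝ) (k : ℤ) :
    lineAngle (unitVec θ) (unitVec ψ) ≤ |θ - ψ - k * π| := by
  set f : ℝ → ℝ := fun Δ ↦ min (arccos (cos Δ)) (arccos (cos (Δ - π)))
  have hf : Function.Periodic f π := by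
    intro Δ; simp only [f, cos_add_pi, cos_sub_pi, neg_neg, min_comm]
  calc lineAngle (unitVec θ) (unitVec ψ) = f (θ - ψ) := by
        simp only [lineAngle, angle_unitVec, f, cos_sub_pi, arccos_neg]
    _ = f (θ - ψ - k * π) := (hf.sub_int_mul_eq k).symm
    _ ≤ arccos (cos (θ - ψ - k * π)) := min_le_left _ _
    _ ≤ |θ - ψ - k * π| := arccos_cos_le_abs _

lemma lineAngle_circlePt_sub_le (x : E2) {r : ℝ} (hr : r ≠ 0) (θ ψ : ℝ) (k : ℤ) :
    lineAngle (circlePt x r θ - x) (circlePt x r ψ - x) ≤ |θ - ψ - k * π| := by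
  simpa only [circlePt_eq_add_smul_unitVec, add_sub_cancel_left, lineAngle_smul_smul hr]
    using lineAngle_unitVec_le θ ψ k

lemma lipschitzWith_circlePt (x : E2) (r : ℝ) : LipschitzWith (Real.nnabs r) (circlePt x r) := by
  refine LipschitzWith.of_dist_le_mul fun θ ψ ↦ ?_
  simpa only [circlePt_eq_add_smul_unitVec, dist_add_left, dist_smul₀, Real.coe_nnabs, one_mul,
    NNReal.coe_one, Real.norm_eq_abs] using
    mul_le_mul_of_nonneg_left (lipschitzWith_unitVec.dist_le_mul θ ψ) (norm_nonneg r)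

lemma hausdorffMeasure_circlePt_image_Ioo_le (x : E2) {r : ℝ} (hr : 0 ≤ r) (a b : ℝ) :
    μH[1] (circlePt x r '' Ioo a b) ≤ ENNReal.ofReal (r * (b - a)) := by
  calc μH[1] (circlePt x r '' Ioo a b) ≤ (Real.nnabs r : ENNReal) ^ (1 : ℝ) * μH[1] (Ioo a b) :=
        (lipschitzWith_circlePt x r).hausdorffMeasure_image_le zero_le_one _
    _ = ENNReal.ofReal (r * (b - a)) := by
        rw [ENNReal.rpow_one, hausdorffMeasure_real, Real.volume_Ioo, ENNReal.ofReal_mul hr,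
          Real.nnabs_of_nonneg hr]; rfl

lemma exists_arc_subset_of_lt_maxArcMeasure {Ω : Set E2} {x : E2} {r ℓ : ℝ} (hr : 0 < r)
    (hℓ : 0 ≤ ℓ) (h : r * ℓ < maxArcMeasure Ω x r) :
    ∃ a b, ℓ < b - a ∧ circlePt x r '' Ioo a b ⊆ Ω := by
  -- `ENNReal.toReal ⊤ = 0`, so `h` forces the supremum to be finite.
  have hne : ⨆ A ∈ {A | IsOpenArc x r A ∧ A ⊆ Ω}, μH[1] A ≠ ⊤ :=
    (ENNReal.toReal_pos_iff.1 ((mul_nonneg hr.le hℓ).trans_lt h)).2.ne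
  obtain ⟨A, ⟨⟨a, b, -, -, rfl⟩, hAΩ⟩, hA⟩ :=
    lt_biSup_iff.1 ((ENNReal.ofReal_lt_iff_lt_toReal (mul_nonneg hr.le hℓ) hne).2 h)
  have hlt := hA.trans_le (hausdorffMeasure_circlePt_image_Ioo_le x hr.le a b)
  exact ⟨a, b, lt_of_mul_lt_mul_left (ENNReal.ofReal_lt_ofReal_iff'.1 hlt).1 hr.le, hAΩ⟩

lemma le_maxArcMeasure_of_carlesonEps_le {Ω : Set E2} {x : E2} {r δ : ℝ} (hr : 0 < r)
    (h : carlesonEps Ω x r ≤ δ) :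
    r * (π - δ) ≤ maxArcMeasure Ω x r ∧ r * (π - δ) ≤ maxArcMeasure (closure Ω)ᶜ x r := by
  rw [carlesonEps, one_div, inv_mul_le_iff₀ hr, max_le_iff, abs_le, abs_le] at h
  constructor <;> linarith [h.1.2, h.2.2]

lemma exists_abs_sub_int_mul_pi_le_of_mem_Icc {a b c d δ θ ψ : ℝ} (hbc : b ≤ c)
    (hda : d ≤ a + 2 * π) (hba : π - δ ≤ b - a) (hdc : π - δ ≤ d - c)
    (hθ : θ ∈ Icc b (a + 2 * π) \ Ioo c d) (hψ : ψ ∈ Icc b (a + 2 * π) \ Ioo c d) :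
    ∃ k : ℤ, |θ - ψ - k * π| ≤ 2 * δ := by
  have hgap : ∀ φ ∈ Icc b (a + 2 * π) \ Ioo c d, φ ≤ c ∨ d ≤ φ := fun φ hφ ↦
    (le_or_gt φ c).imp_right fun h ↦ not_lt.1 fun h' ↦ hφ.2 ⟨h, h'⟩
  obtain ⟨hθb, hθa⟩ := hθ.1
  obtain ⟨hψb, hψa⟩ := hψ.1
  rcases hgap θ hθ with hθc | hθd <;> rcases hgap ψ hψ with hψc | hψd
  · exact ⟨0, abs_le.2 ⟨by push_cast; linarith, by push_cast; linarith⟩⟩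
  · exact ⟨-1, abs_le.2 ⟨by push_cast; linarith, by push_cast; linarith⟩⟩
  · exact ⟨1, abs_le.2 ⟨by push_cast; linarith, by push_cast; linarith⟩⟩
  · exact ⟨0, abs_le.2 ⟨by push_cast; linarith, by push_cast; linarith⟩⟩

lemma Function.Periodic.image_Ioo_add_zsmul {X : Type*} {γ : ℝ → X} {T : ℝ}
    (hγ : Function.Periodic γ T) (n : ℤ) (a b : ℝ) :
    γ '' Ioo (a + n • T) (b + n • T) = γ '' Ioo a b := by
  rw [← image_add_const_Ioo, image_image]
  exact congrArg (· '' Ioo a b) (funext (hγ.zsmul n))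

theorem exists_abs_sub_int_mul_pi_le {X : Type*} {γ : ℝ → X} (hγ : Function.Periodic γ (2 * π))
    {A B : Set X} (hAB : Disjoint A B) {a b c d δ θ ψ : ℝ} (hδ : δ < π) (hA : γ '' Ioo a b ⊆ A)
    (hB : γ '' Ioo c d ⊆ B) (hba : π - δ ≤ b - a) (hdc : π - δ ≤ d - c)
    (hθ : γ θ ∉ A ∪ B) (hψ : γ ψ ∉ A ∪ B) : ∃ k : ℤ, |θ - ψ - k * π| ≤ 2 * δ := by
  have hT : 0 < 2 * π := two_pi_pos
  set c' := toIcoMod hT b c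
  set d' := c' + (d - c)
  have hA' : γ '' Ioo (a + 2 * π) (b + 2 * π) ⊆ A := by
    simpa using (hγ.image_Ioo_add_zsmul 1 a b).le.trans hA
  have hB' : γ '' Ioo c' d' ⊆ B := by
    have hc := toIcoMod_add_toIcoDiv_zsmul hT b c
    rwa [← hγ.image_Ioo_add_zsmul (toIcoDiv hT b c), hc,
      show d' + toIcoDiv hT b c • (2 * π) = d by linarith]
  have hd' : d' ≤ a + 2 * π := by
    by_contra! h
    obtain ⟨p, hp⟩ : (Ioo c' d' ∩ Ioo (a + 2 * π) (b + 2 * π)).Nonempty := by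
      rw [Ioo_inter_Ioo, nonempty_Ioo]
      exact max_lt (lt_min (by linarith) (toIcoMod_lt_right hT b c))
        (lt_min h (by linarith))
    exact hAB.ne_of_mem (hA' (mem_image_of_mem γ hp.2)) (hB' (mem_image_of_mem γ hp.1)) rfl
  have hreduce : ∀ φ, γ φ ∉ A ∪ B → toIcoMod hT b φ ∈ Icc b (a + 2 * π) \ Ioo c' d' := by
    intro φ hφ
    have hγφ : γ (toIcoMod hT b φ) = γ φ := by
      rw [← self_sub_toIcoDiv_zsmul]; exact hγ.sub_zsmul_eq _
    refine ⟨⟨left_le_toIcoMod hT b φ, ?_⟩, fun h ↦ hφ (Or.inr (hγφ ▸ hB' (mem_image_of_mem γ h)))⟩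
    by_contra! h
    exact hφ (Or.inl (hγφ ▸ hA' (mem_image_of_mem γ ⟨h, toIcoMod_lt_right hT b φ⟩)))
  obtain ⟨k, hk⟩ := exists_abs_sub_int_mul_pi_le_of_mem_Icc (left_le_toIcoMod hT b c) hd' hba
    (by linarith) (hreduce θ hθ) (hreduce ψ hψ)
  refine ⟨k + 2 * (toIcoDiv hT b θ - toIcoDiv hT b ψ), ?_⟩
  rw [← self_sub_toIcoDiv_zsmul, ← self_sub_toIcoDiv_zsmul] at hk
  convert hk using 2
  simp only [zsmul_eq_mul]
  push_cast
  ring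

lemma periodic_circlePt (x : E2) (r : ℝ) : Function.Periodic (circlePt x r) (2 * π) := by
  intro θ; simp [circlePt]

lemma exists_eq_circlePt_of_mem_sphere {x y : E2} {r : ℝ} (hy : y ∈ sphere x r) :
    ∃ θ, y = circlePt x r θ := by
  obtain ⟨θ, hθ⟩ := exists_eq_norm_smul_unitVec (y - x)
  rw [← dist_eq_norm, mem_sphere.1 hy] at hθ
  exact ⟨θ, by rw [circlePt_eq_add_smul_unitVec, ← hθ, add_sub_cancel]⟩

theorem line_choice_general (Ωp : Set E2) (hΩ : IsJordanDomain Ωp)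
    (Γ : Set E2) (hΓp : Γ = frontier Ωp)
    (α C₀ : ℝ) (r₀ : ℝ)
    (hε : ∀ x ∈ Γ, ∀ r : ℝ, 0 < r → r ≤ r₀ → carlesonEps Ωp x r ≤ C₀ * r ^ α)
    (x₀ : E2) (hx₀ : x₀ ∈ Γ) (t : ℝ) (ht : 0 < t) (ht' : t ≤ r₀)
    (y w : E2) (hy : y ∈ Metric.sphere x₀ t ∩ Γ) (hw : w ∈ Metric.sphere x₀ t ∩ Γ) :
    lineAngle (w - x₀) (y - x₀) ≤ 2 * C₀ * t ^ α := by
  have hΓ : Γ ⊆ (Ωp ∪ (closure Ωp)ᶜ)ᶜ := by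
    rw [hΓp, hΩ.1.frontier_eq, compl_union, compl_compl]
    exact fun z hz ↦ ⟨hz.2, hz.1⟩
  obtain ⟨θ, rfl⟩ := exists_eq_circlePt_of_mem_sphere hw.1
  obtain ⟨ψ, rfl⟩ := exists_eq_circlePt_of_mem_sphere hy.1
  obtain ⟨hΩp, hΩm⟩ := le_maxArcMeasure_of_carlesonEps_le ht (hε x₀ hx₀ t ht ht')
  refine le_of_forall_gt_imp_ge_of_dense fun β hβ ↦ ?_
  rcases le_or_gt (π / 2) β with hβπ | hβπ
  · exact (lineAngle_le_pi_div_two _ _).trans hβπ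
  have hℓ : t * (π - β / 2) < t * (π - C₀ * t ^ α) := by gcongr; linarith
  obtain ⟨a, b, hab, habΩ⟩ :=
    exists_arc_subset_of_lt_maxArcMeasure ht (by linarith [pi_pos]) (hℓ.trans_le hΩp)
  obtain ⟨c, d, hcd, hcdΩ⟩ :=
    exists_arc_subset_of_lt_maxArcMeasure ht (by linarith [pi_pos]) (hℓ.trans_le hΩm)
  obtain ⟨k, hk⟩ := exists_abs_sub_int_mul_pi_le (periodic_circlePt x₀ t)
    (disjoint_compl_right_iff_subset.2 subset_closure) (by linarith [pi_pos]) habΩ hcdΩ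
    hab.le hcd.le (hΓ hw.2) (hΓ hy.2)
  calc lineAngle (circlePt x₀ t θ - x₀) (circlePt x₀ t ψ - x₀) ≤ |θ - ψ - k * π| :=
        lineAngle_circlePt_sub_le x₀ ht.ne' θ ψ k
    _ ≤ β := by linarith

/-- Line Choice (Corollary 2.2): for `y, w ∈ ∂B(x₀,t) ∩ Γ`, the angle between the line through
`x₀` and `w` and the line through `x₀` and `y` is at most `2C₀ t^α`. -/
theorem line_choice (Ωp : Set E2) (hΩ : IsJordanDomain Ωp)
    (Ωm : Set E2) (hΩm : Ωm = (closure Ωp)ᶜ)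
    (Γ : Set E2) (hΓp : Γ = frontier Ωp) (hΓm : Γ = frontier Ωm)
    (α C₀ : ℝ) (hα : α ∈ Set.Ioo (0 : ℝ) 1) (hC₀ : 0 < C₀)
    (r₀ : ℝ) (hr₀ : 0 < r₀)
    (hε : ∀ x ∈ Γ, ∀ r : ℝ, 0 < r → r ≤ r₀ → carlesonEps Ωp x r ≤ C₀ * r ^ α)
    (x₀ : E2) (hx₀ : x₀ ∈ Γ) (t : ℝ) (ht : 0 < t) (ht' : t ≤ r₀)
    (y w : E2) (hy : y ∈ Metric.sphere x₀ t ∩ Γ) (hw : w ∈ Metric.sphere x₀ t ∩ Γ) :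
    lineAngle (w - x₀) (y - x₀) ≤ 2 * C₀ * t ^ α :=
  line_choice_general Ωp hΩ Γ hΓp α C₀ r₀ hε x₀ hx₀ t ht ht' y w hy hw

end
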